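/- Let d ≥ 2 be an integer and let g : ℂ² → ℂ² be a map satisfying g(G(u,v)) = G(T_d(u), T_d(v)) for all u, v ∈ ℂ. Then the set of bounded orbits K(g) = {z ∈ ℂ² : the sequence (gᵏ(z))_{k≥1} of iterates is bounded} equals {G(u,v) : u, v ∈ [−2,2] ⊂ ℝ}, i.e. the image under G of the real square [−2,2] × [−2,2]. -/

import Mathlib

/-!
Write `u = s + s⁻¹` with `‖s‖ ≥ 1`. The Chebyshev relation gives
`T_dᵏ(u) = s^(dᵏ) + s^(-dᵏ)`, so the `T_d`-orbit of `u` is bounded exactly when `‖s‖ = 1`,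
i.e. when `u ∈ [-2, 2]`. The map `G` semiconjugates `T_d × T_d` to `g`, is surjective and is
proper: for `(a, b) = G(u, v)`, `v²` is a root of the monic cubic
`w³ - (3 + a) w² + (2b + 3 - a) w - (a - 1)²` and `u² = 2b + 5 - 3a - (2 + a) v² + v⁴`.
Hence the `g`-orbit of `G(u, v)` is bounded iff the `T_d`-orbits of `u` and `v` are.
-/

/-- The polynomial parametrization of ℂ²/D₃ ≅ ℂ². -/
noncomputable def G (u v : ℂ) : ℂ × ℂ :=
  (1 + u * v + v ^ 2, (-2 + u ^ 2 + 6 * v ^ 2 + u * v * (3 + v ^ 2)) / 2)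

open Bornology Set Filter Polynomial

lemma exists_one_le_norm_add_inv_eq (x : ℂ) : ∃ s : ℂ, 1 ≤ ‖s‖ ∧ s + s⁻¹ = x := by
  obtain ⟨r, hr⟩ := IsAlgClosed.exists_pow_nat_eq ((x / 2) ^ 2 - 1) two_pos
  have hmul : (x / 2 + r) * (x / 2 - r) = 1 := by linear_combination -hr
  have hpos : 0 < ‖x / 2 + r‖ := norm_pos_iff.2 (left_ne_zero_of_mul_eq_one hmul)
  rcases le_total 1 ‖x / 2 + r‖ with h | h
  · exact ⟨x / 2 + r, h, by rw [inv_eq_of_mul_eq_one_right hmul]; ring⟩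
  · refine ⟨x / 2 - r, ?_, by rw [inv_eq_of_mul_eq_one_left hmul]; ring⟩
    rw [← inv_eq_of_mul_eq_one_right hmul, norm_inv]
    exact (one_le_inv₀ hpos).2 h

lemma exists_ofReal_mem_Icc_iff_exists_norm_eq_one (x : ℂ) :
    (∃ r : ℝ, r ∈ Icc (-2 : ℝ) 2 ∧ (r : ℂ) = x) ↔ ∃ s : ℂ, ‖s‖ = 1 ∧ s + s⁻¹ = x := by
  constructor
  · rintro ⟨r, ⟨hr₁, hr₂⟩, rfl⟩
    refine ⟨Complex.exp (Real.arccos (r / 2) * Complex.I), Complex.norm_exp_ofReal_mul_I _, ?_⟩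
    rw [← Complex.exp_neg, ← neg_mul, Complex.exp_mul_I, Complex.exp_mul_I, Complex.cos_neg,
      Complex.sin_neg, ← Complex.ofReal_cos, Real.cos_arccos (by linarith) (by linarith)]
    push_cast
    ring
  · rintro ⟨s, hs, rfl⟩
    obtain ⟨hre₁, hre₂⟩ := abs_le.1 ((Complex.abs_re_le_norm s).trans_eq hs)
    exact ⟨2 * s.re, ⟨by linarith, by linarith⟩, by rw [Complex.inv_eq_conj hs, Complex.add_conj]⟩

lemma iterate_aeval_add_inv {d : ℕ} {T : ℤ[X]}
    (hT : ∀ s : ℂ, s ≠ 0 → aeval (s + s⁻¹) T = s ^ (d : ℤ) + s ^ (-(d : ℤ)))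
    {s : ℂ} (hs : s ≠ 0) (k : ℕ) :
    (fun x : ℂ => aeval x T)^[k] (s + s⁻¹) = s ^ d ^ k + (s ^ d ^ k)⁻¹ := by
  induction k with
  | zero => simp
  | succ k ih =>
    rw [Function.iterate_succ_apply', ih, hT _ (pow_ne_zero _ hs), zpow_neg, zpow_natCast,
      ← pow_mul, ← pow_succ]

lemma isBounded_range_iterate_aeval_iff {d : ℕ} (hd : 2 ≤ d) {T : ℤ[X]}
    (hT : ∀ s : ℂ, s ≠ 0 → aeval (s + s⁻¹) T = s ^ (d : ℤ) + s ^ (-(d : ℤ))) (x : ℂ) :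
    IsBounded (range fun k => (fun x : ℂ => aeval x T)^[k + 1] x) ↔
      ∃ s : ℂ, ‖s‖ = 1 ∧ s + s⁻¹ = x := by
  constructor
  · intro hb
    obtain ⟨s, hs, rfl⟩ := exists_one_le_norm_add_inv_eq x
    refine ⟨s, hs.antisymm' (not_lt.1 fun h => ?_), rfl⟩
    obtain ⟨C, hC⟩ := isBounded_iff_forall_norm_le.1 hb
    have hgrow : Tendsto (fun k => ‖s‖ ^ d ^ (k + 1)) atTop atTop :=
      (tendsto_pow_atTop_atTop_of_one_lt h).comp
        ((tendsto_pow_atTop_atTop_of_one_lt hd).comp (tendsto_add_atTop_nat 1))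
    obtain ⟨k, hk⟩ := (hgrow.eventually_gt_atTop (C + 1)).exists
    have horbit := hC _ (mem_range_self k)
    rw [iterate_aeval_add_inv hT (norm_pos_iff.1 (one_pos.trans h)) (k + 1)] at horbit
    have hinv : ‖(s ^ d ^ (k + 1))⁻¹‖ ≤ 1 := by
      rw [norm_inv, norm_pow]
      exact inv_le_one_of_one_le₀ (one_le_pow₀ h.le)
    have hlower := norm_le_add_norm_add (s ^ d ^ (k + 1)) (s ^ d ^ (k + 1))⁻¹
    rw [norm_pow] at hlower
    linarith
  · rintro ⟨s, hs, rfl⟩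
    refine isBounded_iff_forall_norm_le.2 ⟨2, ?_⟩
    rintro _ ⟨k, rfl⟩
    dsimp only
    rw [iterate_aeval_add_inv hT (norm_ne_zero_iff.1 (hs.trans_ne one_ne_zero))]
    calc _ ≤ ‖s ^ d ^ (k + 1)‖ + ‖(s ^ d ^ (k + 1))⁻¹‖ := norm_add_le _ _
      _ = 2 := by rw [norm_inv, norm_pow, hs]; norm_num

lemma Bornology.IsBounded.range_comp_of_continuous {ι X Y : Type*} [PseudoMetricSpace X]
    [ProperSpace X] [PseudoMetricSpace Y] {a : ι → X} (ha : IsBounded (range a)) {f : X → Y}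
    (hf : Continuous f) : IsBounded (range fun i => f (a i)) := by
  change IsBounded (range (f ∘ a))
  rw [range_comp]
  exact (ha.isCompact_closure.image hf).isBounded.subset
    (image_mono (subset_closure (s := range a)))

lemma isBounded_range_prodMk_iff {ι X Y : Type*} [PseudoMetricSpace X] [PseudoMetricSpace Y]
    {a : ι → X} {b : ι → Y} :
    IsBounded (range fun i => (a i, b i)) ↔ IsBounded (range a) ∧ IsBounded (range b) := by
  refine ⟨fun h => ⟨?_, ?_⟩, fun h => (h.1.prod h.2).subset ?_⟩
  · simpa [← range_comp, Function.comp_def] using LipschitzWith.prod_fst.isBounded_image h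
  · simpa [← range_comp, Function.comp_def] using LipschitzWith.prod_snd.isBounded_image h
  · rintro _ ⟨i, rfl⟩
    exact ⟨mem_range_self i, mem_range_self i⟩

lemma norm_le_of_pow_three_eq {K : Type*} [NormedDivisionRing K] {x p q r : K}
    (h : x ^ 3 = p * x ^ 2 + q * x + r) : ‖x‖ ≤ max 1 (‖p‖ + ‖q‖ + ‖r‖) := by
  rcases le_or_gt ‖x‖ 1 with hx | hx
  · exact le_max_of_le_left hx
  refine le_max_of_le_right ?_
  have hx2 : ‖x‖ ≤ ‖x‖ ^ 2 := le_self_pow₀ hx.le two_ne_zero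
  have hx2' : 1 ≤ ‖x‖ ^ 2 := one_le_pow₀ hx.le
  refine le_of_mul_le_mul_left ?_ (pow_pos (one_pos.trans hx) 2)
  calc ‖x‖ ^ 2 * ‖x‖ = ‖p * x ^ 2 + q * x + r‖ := by rw [← pow_succ, ← norm_pow, h]
    _ ≤ ‖p‖ * ‖x‖ ^ 2 + ‖q‖ * ‖x‖ + ‖r‖ := by
      rw [← norm_pow, ← norm_mul, ← norm_mul]
      exact norm_add₃_le
    _ ≤ ‖p‖ * ‖x‖ ^ 2 + ‖q‖ * ‖x‖ ^ 2 + ‖r‖ * ‖x‖ ^ 2 := by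
      gcongr
      exact le_mul_of_one_le_right (norm_nonneg r) hx2'
    _ = ‖x‖ ^ 2 * (‖p‖ + ‖q‖ + ‖r‖) := by ring

lemma isBounded_range_of_pow_three_eq {ι K : Type*} [NormedDivisionRing K] {x : ι → K}
    {c : ι → K × K × K} (hc : IsBounded (range c))
    (hx : ∀ i, x i ^ 3 = (c i).1 * x i ^ 2 + (c i).2.1 * x i + (c i).2.2) :
    IsBounded (range x) := by
  obtain ⟨C, hC⟩ := isBounded_iff_forall_norm_le.1 hc
  refine isBounded_iff_forall_norm_le.2 ⟨max 1 (3 * C), ?_⟩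
  rintro _ ⟨i, rfl⟩
  have h₁ : ‖(c i).1‖ ≤ C := (norm_fst_le _).trans (hC _ ⟨i, rfl⟩)
  have h₂ : ‖(c i).2.1‖ ≤ C := ((norm_fst_le _).trans (norm_snd_le _)).trans (hC _ ⟨i, rfl⟩)
  have h₃ : ‖(c i).2.2‖ ≤ C := ((norm_snd_le _).trans (norm_snd_le _)).trans (hC _ ⟨i, rfl⟩)
  exact (norm_le_of_pow_three_eq (hx i)).trans (max_le_max le_rfl (by linarith))

lemma isBounded_range_of_isBounded_range_pow {ι K : Type*} [NormedDivisionRing K] {x : ι → K}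
    {n : ℕ} (hn : n ≠ 0) (h : IsBounded (range fun i => x i ^ n)) : IsBounded (range x) := by
  obtain ⟨C, hC⟩ := isBounded_iff_forall_norm_le.1 h
  refine isBounded_iff_forall_norm_le.2 ⟨max 1 C, ?_⟩
  rintro _ ⟨i, rfl⟩
  rcases le_total ‖x i‖ 1 with hx | hx
  · exact le_max_of_le_left hx
  · exact le_max_of_le_right ((le_self_pow₀ hx hn).trans ((norm_pow _ _).symm.trans_le
      (hC _ ⟨i, rfl⟩)))

lemma isBounded_range_G_iff {ι : Type*} {u v : ι → ℂ} :
    IsBounded (range fun i => G (u i) (v i)) ↔ IsBounded (range u) ∧ IsBounded (range v) := by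
  constructor
  · intro h
    have hv2 : IsBounded (range fun i => v i ^ 2) := by
      refine isBounded_range_of_pow_three_eq (h.range_comp_of_continuous
        (f := fun z : ℂ × ℂ => (3 + z.1, -(2 * z.2 + 3 - z.1), (z.1 - 1) ^ 2)) (by fun_prop))
        fun i => ?_
      simp only [G]
      ring
    have hu2 : IsBounded (range fun i => u i ^ 2) := by
      convert (isBounded_range_prodMk_iff.2 ⟨h, hv2⟩).range_comp_of_continuous
        (f := fun q : (ℂ × ℂ) × ℂ => 2 * q.1.2 + 5 - 3 * q.1.1 - (2 + q.1.1) * q.2 + q.2 ^ 2)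
        (by fun_prop) using 3 with i
      simp only [G]
      ring
    exact ⟨isBounded_range_of_isBounded_range_pow two_ne_zero hu2,
      isBounded_range_of_isBounded_range_pow two_ne_zero hv2⟩
  · intro h
    exact (isBounded_range_prodMk_iff.2 h).range_comp_of_continuous
      (f := fun z : ℂ × ℂ => G z.1 z.2) (by unfold G; fun_prop)

lemma exists_pow_three_eq {K : Type*} [Field K] [IsAlgClosed K] (p q r : K) :
    ∃ x : K, x ^ 3 = p * x ^ 2 + q * x + r := by
  have hdeg : (X ^ 3 - C p * X ^ 2 - C q * X - C r).degree = 3 := by compute_degree!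
  obtain ⟨x, hx⟩ := IsAlgClosed.exists_root _ (by rw [hdeg]; decide)
  refine ⟨x, ?_⟩
  simp only [IsRoot, eval_sub, eval_pow, eval_mul, eval_C, eval_X] at hx
  linear_combination hx

lemma G_surjective (z : ℂ × ℂ) : ∃ u v : ℂ, G u v = z := by
  obtain ⟨a, b⟩ := z
  by_cases ha : a = 1
  · obtain ⟨u, hu⟩ := IsAlgClosed.exists_pow_nat_eq (2 * b + 2) two_pos
    refine ⟨u, 0, ?_⟩
    simp only [G, ha, Prod.mk.injEq]
    constructor
    · ring
    · linear_combination hu / 2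
  · -- `v²` must be a root of the cubic of `isBounded_range_G_iff`; as `a ≠ 1`, that root is nonzero
    obtain ⟨w, hw⟩ := exists_pow_three_eq (3 + a) (-(2 * b + 3 - a)) ((a - 1) ^ 2)
    obtain ⟨v, rfl⟩ := IsAlgClosed.exists_pow_nat_eq w two_pos
    have hv : v ≠ 0 := by
      rintro rfl
      exact ha (sub_eq_zero.1 (pow_eq_zero_iff two_ne_zero |>.1 (by linear_combination -hw)))
    refine ⟨(a - 1 - v ^ 2) / v, v, ?_⟩
    simp only [G, Prod.mk.injEq]
    field_simp
    constructor
    · ring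
    · linear_combination -hw

theorem K_set_eq_image_of_square (d : ℕ) (hd : 2 ≤ d) (T : Polynomial ℤ)
    (hT : ∀ s : ℂ, s ≠ 0 → Polynomial.aeval (s + s⁻¹) T = s ^ (d : ℤ) + s ^ (-(d : ℤ)))
    (g : ℂ × ℂ → ℂ × ℂ)
    (hg : ∀ u v : ℂ, g (G u v) = G (Polynomial.aeval u T) (Polynomial.aeval v T)) :
    {z : ℂ × ℂ | Bornology.IsBounded (Set.range fun k : ℕ => g^[k + 1] z)}
      = {w : ℂ × ℂ | ∃ u v : ℝ, u ∈ Set.Icc (-2 : ℝ) 2 ∧ v ∈ Set.Icc (-2 : ℝ) 2 ∧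
          G (u : ℂ) (v : ℂ) = w} := by
  have hiter (u v : ℂ) (k : ℕ) : g^[k] (G u v) =
      G ((fun x : ℂ => aeval x T)^[k] u) ((fun x : ℂ => aeval x T)^[k] v) := by
    induction k with
    | zero => rfl
    | succ k ih => rw [Function.iterate_succ_apply', ih, hg, Function.iterate_succ_apply',
        Function.iterate_succ_apply']
  have horbit (u v : ℂ) : IsBounded (range fun k => g^[k + 1] (G u v)) ↔
      (∃ r : ℝ, r ∈ Icc (-2 : ℝ) 2 ∧ (r : ℂ) = u) ∧ ∃ r : ℝ, r ∈ Icc (-2 : ℝ) 2 ∧ (r : ℂ) = v := by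
    simp only [hiter, isBounded_range_G_iff, isBounded_range_iterate_aeval_iff hd hT,
      exists_ofReal_mem_Icc_iff_exists_norm_eq_one]
  ext z
  constructor
  · intro hz
    obtain ⟨u, v, rfl⟩ := G_surjective z
    obtain ⟨⟨r, hr, rfl⟩, t, ht, rfl⟩ := (horbit u v).1 hz
    exact ⟨r, t, hr, ht, rfl⟩
  · rintro ⟨r, t, hr, ht, rfl⟩
    exact (horbit r t).2 ⟨⟨r, hr, rfl⟩, t, ht, rfl⟩
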